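/- Let X be a Lefschetz complex over a ring R with unity, let 𝒱 be a multivector field on X with X invariant, and let S be an isolated invariant set that decomposes into two isolated invariant subsets S₁, S₂ ⊆ S (i.e. S₁ ∩ S₂ = ∅ and every full solution in S is a solution in S₁ or in S₂). Then the Conley index of S splits: H^κ(S) ≅ H^κ(S₁) ⊕ H^κ(S₂). -/
import Mathlib


open scoped Classical

namespace CMVF

variable {R : Type*} [Ring R] {X : Type*} [Fintype X]

/-- A Lefschetz complex over `R` with cells `X`. -/
structure Lefschetz (R : Type*) [Ring R] (X : Type*) [Fintype X] where
  dim : X → ℕ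
  κ : X → X → R
  dim_facet : ∀ x y, κ x y ≠ 0 → dim x = dim y + 1
  κ_sq : ∀ x z, (∑ y : X, κ x y * κ y z) = 0

namespace Lefschetz

variable (L : Lefschetz R X)

/-- The face order `y ≤κ x` : the partial order generated by the facet relation. -/
def le (y x : X) : Prop := Relation.ReflTransGen (fun a b => L.κ b a ≠ 0) y x

/-- Closure of a set of cells: all faces of cells of `A`. -/
def cls (A : Set X) : Set X := {z | ∃ a ∈ A, L.le z a}

/-- Closure of a single cell. -/
def clPt (x : X) : Set X := L.cls {x}

/-- The minimal open set containing `x`. -/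
def opn (x : X) : Set X := {z | L.le x z}

/-- `A` is closed. -/
def Closed (A : Set X) : Prop := L.cls A = A

/-- The mouth of `A`. -/
def mo (A : Set X) : Set X := L.cls A \ A

/-- `A` is proper: its mouth is closed. -/
def Proper (A : Set X) : Prop := L.Closed (L.mo A)

/-- Relative closure within an ambient subcomplex `W`. -/
def clsIn (W A : Set X) : Set X := L.cls A ∩ W

/-- Relative mouth within an ambient subcomplex `W`. -/
def moIn (W A : Set X) : Set X := L.clsIn W A \ A

/-- The boundary operator of the subcomplex determined by `A`
(`∂ x = ∑ y ∈ A, κ x y • y` for `x ∈ A`). -/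
noncomputable def bd (A : Set X) : (X → R) →ₗ[R] (X → R) where
  toFun f := fun y => if y ∈ A then ∑ x : X, (if x ∈ A then f x * L.κ x y else 0) else 0
  map_add' f g := by
    funext y
    by_cases hy : y ∈ A
    · simp only [hy, if_true, Pi.add_apply]
      rw [← Finset.sum_add_distrib]
      refine Finset.sum_congr rfl fun x _ => ?_
      by_cases hx : x ∈ A <;> simp [hx, add_mul]
    · simp [hy]
  map_smul' r f := by
    funext y
    by_cases hy : y ∈ A
    · simp only [hy, if_true, Pi.smul_apply, smul_eq_mul, RingHom.id_apply]
      rw [Finset.mul_sum]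
      refine Finset.sum_congr rfl fun x _ => ?_
      by_cases hx : x ∈ A <;> simp [hx, mul_assoc]
    · simp [hy]

/-- The `n`-chains of the subcomplex determined by `A`. -/
noncomputable def chainGroup (A : Set X) (n : ℕ) : Submodule R (X → R) :=
  Submodule.span R {f | ∃ x ∈ A, L.dim x = n ∧ f = Pi.single x 1}

/-- The `n`-cycles of the subcomplex determined by `A`. -/
noncomputable def cycles (A : Set X) (n : ℕ) : Submodule R (X → R) :=
  L.chainGroup A n ⊓ LinearMap.ker (L.bd A)

/-- The `n`-boundaries of the subcomplex determined by `A`. -/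
noncomputable def boundaries (A : Set X) (n : ℕ) : Submodule R (X → R) :=
  (L.chainGroup A (n + 1)).map (L.bd A)

/-- The Lefschetz homology `H^κ_n(A)` of the subcomplex determined by `A`. -/
noncomputable def homology (A : Set X) (n : ℕ) : Type _ :=
  (L.cycles A n) ⧸ ((L.boundaries A n).comap (L.cycles A n).subtype)

noncomputable instance homologyAddCommGroup (A : Set X) (n : ℕ) :
    AddCommGroup (L.homology A n) :=
  inferInstanceAs (AddCommGroup
    ((L.cycles A n) ⧸ ((L.boundaries A n).comap (L.cycles A n).subtype)))

noncomputable instance homologyModule (A : Set X) (n : ℕ) :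
    Module R (L.homology A n) :=
  inferInstanceAs (Module R
    ((L.cycles A n) ⧸ ((L.boundaries A n).comap (L.cycles A n).subtype)))

/-- `A` is a zero space: its Lefschetz homology vanishes. -/
def HomologyZero (A : Set X) : Prop := ∀ n, Subsingleton (L.homology A n)

/-- The Poincaré polynomial `p_A(t) = ∑ rank H^κ_n(A) tⁿ`. -/
noncomputable def poincare (A : Set X) : Polynomial ℕ :=
  ∑ n ∈ Finset.image L.dim Finset.univ,
    Polynomial.C (Module.finrank R (L.homology A n)) * Polynomial.X ^ n

/-- `V` is a multivector: proper, with a unique maximal element. -/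
def IsMV (V : Set X) : Prop :=
  L.Proper V ∧ ∃! m, m ∈ V ∧ ∀ x ∈ V, L.le x m

/-- A regular multivector: one with vanishing Lefschetz homology. -/
def Regular (V : Set X) : Prop := L.HomologyZero V

end Lefschetz

/-- A combinatorial multivector field on a Lefschetz complex: a partition into multivectors. -/
structure MVField {R : Type*} [Ring R] {X : Type*} [Fintype X] (L : Lefschetz R X) where
  mvs : Set (Set X)
  isMV : ∀ V ∈ mvs, L.IsMV V
  cover : ∀ x : X, ∃! V, V ∈ mvs ∧ x ∈ V

namespace MVField

variable {L : Lefschetz R X} (F : MVField L)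

/-- `[x]` : the multivector containing `x`. -/
noncomputable def mclass (x : X) : Set X := (F.cover x).exists.choose

lemma mclass_spec (x : X) : F.mclass x ∈ F.mvs ∧ x ∈ F.mclass x :=
  (F.cover x).exists.choose_spec

/-- `x★` : the dominant cell of the multivector containing `x`. -/
noncomputable def star (x : X) : X :=
  ((F.isMV _ (F.mclass_spec x).1).2).exists.choose

/-- `[x]°` : the regular part of the multivector of `x`. -/
noncomputable def regPart (x : X) : Set X :=
  if L.Regular (F.mclass x) then F.mclass x else F.mclass x \ {F.star x}

/-- The multivalued map `Π_𝒱`. -/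
noncomputable def Pi (x : X) : Set X :=
  if x = F.star x then L.clPt x \ F.regPart x else {F.star x}

/-- The multivalued map of the multivector field restricted to the subcomplex `W`. -/
noncomputable def PiIn (W : Set X) (x : X) : Set X := F.Pi x ∩ W

/-- `φ : ℤ → X` is a full solution of the multivector field restricted to `W`. -/
def IsSolIn (W : Set X) (φ : ℤ → X) : Prop := ∀ i, φ (i + 1) ∈ F.PiIn W (φ i)

/-- There is a full solution (of the field restricted to `W`) through `x` with values in `A`. -/
def FullSolThroughIn (W : Set X) (x : X) (A : Set X) : Prop :=
  ∃ φ : ℤ → X, F.IsSolIn W φ ∧ (∃ i, φ i = x) ∧ ∀ i, φ i ∈ A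

/-- `A` is `𝒱`-compatible. -/
def Compat (A : Set X) : Prop := ∀ x ∈ A, F.mclass x ⊆ A

/-- `[A]⁻` : the maximal `𝒱`-compatible subset of `A`. -/
def lowerC (A : Set X) : Set X := {x ∈ A | F.mclass x ⊆ A}

/-- `[A]⁺` : the minimal `𝒱`-compatible superset of `A`. -/
def upperC (A : Set X) : Set X := ⋃ x ∈ A, F.mclass x

/-- `Inv A`, the invariant part of `A`, computed in the subcomplex `W`. -/
def InvPartIn (W A : Set X) : Set X :=
  {x ∈ A | F.FullSolThroughIn W (F.star x) (F.lowerC A)}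

/-- `A` is invariant (within the subcomplex `W`). -/
def InvariantIn (W A : Set X) : Prop := F.InvPartIn W A = A

/-- `φ` is a path (solution) on the integer interval `[a,b]`, within the subcomplex `W`. -/
def IsPathOnIn (W : Set X) (a b : ℤ) (φ : ℤ → X) : Prop :=
  ∀ i, a ≤ i → i < b → φ (i + 1) ∈ F.PiIn W (φ i)

/-- `S` admits an internal tangency within the subcomplex `W`. -/
def HasInternalTangencyIn (W S : Set X) : Prop :=
  ∃ (a b : ℤ) (φ : ℤ → X), a ≤ b ∧ F.IsPathOnIn W a b φ ∧
    (∀ i, a ≤ i → i ≤ b → φ i ∈ L.clsIn W S) ∧ φ a ∈ S ∧ φ b ∈ S ∧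
    ∃ i, a ≤ i ∧ i ≤ b ∧ φ i ∈ L.moIn W S

/-- `S` is an isolated invariant set within the subcomplex `W`. -/
def IsoInvIn (W S : Set X) : Prop :=
  F.InvariantIn W S ∧ ¬ F.HasInternalTangencyIn W S

/-- `N` is a trapping region within the subcomplex `W`. -/
def TrappingIn (W N : Set X) : Prop :=
  N ⊆ W ∧ F.Compat N ∧ ∀ x ∈ N, F.PiIn W x ⊆ N

/-- `N` is a backward trapping region within the subcomplex `W`. -/
def BackTrappingIn (W N : Set X) : Prop :=
  N ⊆ W ∧ F.Compat N ∧ ∀ x ∈ W, ∀ y ∈ F.PiIn W x, y ∈ N → x ∈ N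

/-- `A` is an attractor within the subcomplex `W`. -/
def AttractorIn (W A : Set X) : Prop :=
  ∃ N, F.TrappingIn W N ∧ A = F.InvPartIn W N

/-- `A` is a repeller within the subcomplex `W`. -/
def RepellerIn (W A : Set X) : Prop :=
  ∃ N, F.BackTrappingIn W N ∧ A = F.InvPartIn W N

/-- The α-limit set of a full solution `φ`. -/
def alphaIn (W : Set X) (φ : ℤ → X) : Set X :=
  ⋂ k : ℕ, F.InvPartIn W (F.upperC (φ '' {i : ℤ | i ≤ -(k : ℤ)}))

/-- The ω-limit set of a full solution `φ`. -/
def omegaIn (W : Set X) (φ : ℤ → X) : Set X :=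
  ⋂ k : ℕ, F.InvPartIn W (F.upperC (φ '' {i : ℤ | (k : ℤ) ≤ i}))

/-- `C(A',A)` : the set of cells lying on connections running from `A'` to `A`. -/
def ConnIn (W A' A : Set X) : Set X :=
  {x | ∃ φ : ℤ → X, F.IsSolIn W φ ∧ (∃ i, φ i = F.star x) ∧
        F.alphaIn W φ ⊆ A' ∧ F.omegaIn W φ ⊆ A}

/-- `(A, Rp)` is an attractor-repeller pair in the subcomplex `W`. -/
def ARPairIn (W A Rp : Set X) : Prop :=
  F.AttractorIn W A ∧ F.RepellerIn W Rp ∧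
    A = F.InvPartIn W (W \ Rp) ∧ Rp = F.InvPartIn W (W \ A)

/-- `M` is a Morse decomposition of the subcomplex `W`, with admissible order `le`. -/
def MorseDecompIn (W : Set X) {P : Type*} [Finite P] (le : P → P → Prop)
    (M : P → Set X) : Prop :=
  IsPartialOrder P le ∧
  (∀ r, F.IsoInvIn W (M r)) ∧
  (∀ r r', r ≠ r' → Disjoint (M r) (M r')) ∧
  (∀ φ : ℤ → X, F.IsSolIn W φ →
    ∃ r r', le r r' ∧ F.alphaIn W φ ⊆ M r' ∧ F.omegaIn W φ ⊆ M r) ∧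
  (∀ φ : ℤ → X, F.IsSolIn W φ → ∀ r,
    F.alphaIn W φ ⊆ M r → F.omegaIn W φ ⊆ M r → Set.range φ ⊆ M r)

/-- The Morse set `M(I)` of a family of sets indexed by `I ⊆ P`. -/
def MorseSetIn (W : Set X) {P : Type*} (M : P → Set X) (I : Set P) : Set X :=
  ⋃ r ∈ I, ⋃ r' ∈ I, F.ConnIn W (M r') (M r)

/-- `(P₁, P₂)` is an index pair for the isolated invariant set `S`. -/
def IndexPair (S P₁ P₂ : Set X) : Prop :=
  L.Closed P₁ ∧ L.Closed P₂ ∧ P₂ ⊆ P₁ ∧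
  (∀ x ∈ P₂, ∀ y ∈ F.Pi x, y ∈ P₁ → y ∈ P₂) ∧
  (∀ x ∈ P₁, (∃ y ∈ F.Pi x, y ∉ P₁) → x ∈ P₂) ∧
  S = F.InvPartIn Set.univ (P₁ \ P₂)

/-- `x ⤳_A y` : there is a path of length at least two in `A` from `x★` to `y★`. -/
def PathConn (A : Set X) (x y : X) : Prop :=
  ∃ (a b : ℤ) (φ : ℤ → X), a < b ∧
    (∀ i, a ≤ i → i < b → φ (i + 1) ∈ F.Pi (φ i)) ∧
    (∀ i, a ≤ i → i ≤ b → φ i ∈ A) ∧ φ a = F.star x ∧ φ b = F.star y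

/-- The chain recurrent set. -/
def CR : Set X := {x | F.PathConn Set.univ x x}

/-- `B` is a basic set: an equivalence class of mutual connectedness in `CR`. -/
def IsBasicSet (B : Set X) : Prop :=
  ∃ x ∈ F.CR, B = {y ∈ F.CR | F.PathConn Set.univ x y ∧ F.PathConn Set.univ y x}

/-- The set `E_P` of cells of `P₁` all of whose forward solutions meet `P₂`. -/
def Ep (P₁ P₂ : Set X) : Set X :=
  {x ∈ P₁ | ∀ φ : ℕ → X, φ 0 = x → (∀ i, φ (i + 1) ∈ F.Pi (φ i)) → ∃ i, φ i ∈ P₂}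

/-- The preorder `≤_𝒱` induced by the arrows of the multivector field. -/
def leV : X → X → Prop := Relation.ReflTransGen (fun y x => y ∈ F.Pi x)

/-- The multivector field is acyclic: `≤_𝒱` is a partial order. -/
def Acyclic : Prop := ∀ x y, F.leV x y → F.leV y x → x = y

end MVField

end CMVF

namespace CMVF

namespace MVField

variable {R : Type*} [Ring R] {X : Type*} [Fintype X] {L : Lefschetz R X} (F : MVField L)

lemma mclass_mem_mvs (x : X) : F.mclass x ∈ F.mvs := (F.mclass_spec x).1

lemma mem_mclass (x : X) : x ∈ F.mclass x := (F.mclass_spec x).2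

lemma mclass_eq_of_mem {x y : X} (h : y ∈ F.mclass x) : F.mclass y = F.mclass x :=
  (F.cover y).unique ⟨F.mclass_mem_mvs y, F.mem_mclass y⟩ ⟨F.mclass_mem_mvs x, h⟩

lemma star_spec (x : X) :
    F.star x ∈ F.mclass x ∧ ∀ z ∈ F.mclass x, L.le z (F.star x) :=
  ((F.isMV _ (F.mclass_spec x).1).2).exists.choose_spec

lemma star_mem (x : X) : F.star x ∈ F.mclass x := (F.star_spec x).1

lemma le_star {x z : X} (h : z ∈ F.mclass x) : L.le z (F.star x) := (F.star_spec x).2 z h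

lemma mclass_star (x : X) : F.mclass (F.star x) = F.mclass x :=
  F.mclass_eq_of_mem (F.star_mem x)

lemma star_star (x : X) : F.star (F.star x) = F.star x := by
  have hu := (F.isMV _ (F.mclass_spec x).1).2
  have h1 : F.star (F.star x) ∈ F.mclass x ∧
      ∀ z ∈ F.mclass x, L.le z (F.star (F.star x)) := by
    have h := F.star_spec (F.star x); rwa [F.mclass_star x] at h
  exact hu.unique h1 (F.star_spec x)

lemma compat_of_invariant {A : Set X} (hA : F.InvariantIn Set.univ A) {x : X} (hx : x ∈ A) :
    F.mclass x ⊆ A := by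
  rw [InvariantIn] at hA
  rw [← hA] at hx
  obtain ⟨-, φ, _hsol, ⟨i0, hi0⟩, hmem⟩ := hx
  have h := hmem i0; rw [hi0] at h
  rw [← F.mclass_star x]
  exact h.2

lemma exists_sol_of_invariant {A : Set X} (hA : F.InvariantIn Set.univ A) {x : X} (hx : x ∈ A) :
    ∃ φ : ℤ → X, F.IsSolIn Set.univ φ ∧ φ 0 = F.star x ∧ ∀ i, φ i ∈ A := by
  rw [InvariantIn] at hA
  rw [← hA] at hx
  obtain ⟨-, φ, hsol, ⟨i0, hi0⟩, hmem⟩ := hx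
  refine ⟨fun i => φ (i + i0), fun i => ?_, by simpa using hi0, fun i => (hmem _).1⟩
  show φ (i + 1 + i0) ∈ F.PiIn Set.univ (φ (i + i0))
  have he : i + 1 + i0 = i + i0 + 1 := by ring
  rw [he]
  exact hsol (i + i0)

lemma cross_kappa {S A B : Set X} (hA : F.InvariantIn Set.univ A) (hB : F.InvariantIn Set.univ B)
    (hsubA : A ⊆ S) (hsubB : B ⊆ S) (hdisj : ∀ z, z ∈ A → z ∈ B → False)
    (hdec : ∀ φ : ℤ → X, F.IsSolIn Set.univ φ → (∀ i, φ i ∈ S) →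
      (∀ i, φ i ∈ A) ∨ (∀ i, φ i ∈ B)) :
    ∀ x ∈ A, ∀ y ∈ B, L.κ x y = 0 := by
  intro x hx y hy
  by_contra hκ
  have hyx : L.le y (F.star x) :=
    Relation.ReflTransGen.trans (Relation.ReflTransGen.single hκ) (F.le_star (F.mem_mclass x))
  have hyclo : y ∈ L.clPt (F.star x) := ⟨F.star x, rfl, hyx⟩
  have hynot : y ∉ F.regPart (F.star x) := by
    intro hmem
    have h2 : y ∈ F.mclass (F.star x) := by
      unfold regPart at hmem
      split at hmem
      · exact hmem
      · exact hmem.1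
    rw [F.mclass_star] at h2
    exact hdisj y (F.compat_of_invariant hA hx h2) hy
  have hyPi : y ∈ F.Pi (F.star x) := by
    unfold Pi
    rw [if_pos (F.star_star x).symm]
    exact ⟨hyclo, hynot⟩
  obtain ⟨ψ₁, hs1, h10, h1A⟩ := F.exists_sol_of_invariant hA hx
  obtain ⟨ψ₂, hs2, h20, h2B⟩ := F.exists_sol_of_invariant hB hy
  have hstarxA : F.star x ∈ A := F.compat_of_invariant hA hx (F.star_mem x)
  have hstaryB : F.star y ∈ B := F.compat_of_invariant hB hy (F.star_mem y)
  -- build a glued full solution φ with φ 0 ∈ A and some value in B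
  have main : ∃ φ : ℤ → X, F.IsSolIn Set.univ φ ∧ (∀ i, φ i ∈ S) ∧
      φ 0 ∈ A ∧ ∃ j, φ j ∈ B := by
    by_cases hys : y = F.star y
    · refine ⟨fun i => if i ≤ 0 then ψ₁ i else ψ₂ (i - 1), fun i => ?_, fun i => ?_, ?_, 1, ?_⟩
      · rcases lt_trichotomy i 0 with h | h | h
        · have h1 : i + 1 ≤ 0 := by omega
          simp only [if_pos h.le, if_pos h1]
          exact hs1 i
        · subst h
          simp only [le_refl, if_pos, show ¬ ((0:ℤ)+1 ≤ 0) by omega, if_neg, if_false]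
          show ψ₂ (0 + 1 - 1) ∈ F.PiIn Set.univ (ψ₁ 0)
          rw [h10, show (0:ℤ) + 1 - 1 = 0 by ring, h20, ← hys]
          exact ⟨hyPi, trivial⟩
        · have h1 : ¬ (i ≤ 0) := by omega
          have h2 : ¬ (i + 1 ≤ 0) := by omega
          simp only [if_neg h1, if_neg h2]
          have he : i + 1 - 1 = (i - 1) + 1 := by ring
          rw [he]
          exact hs2 (i - 1)
      · show (if i ≤ 0 then ψ₁ i else ψ₂ (i - 1)) ∈ S
        by_cases h : i ≤ 0
        · rw [if_pos h]; exact hsubA (h1A i)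
        · rw [if_neg h]; exact hsubB (h2B (i - 1))
      · simp only [le_refl, if_pos]; rw [h10]; exact hstarxA
      · norm_num
        rw [h20, ← hys]; exact hy
    · refine ⟨fun i => if i ≤ 0 then ψ₁ i else if i = 1 then y else ψ₂ (i - 2),
        fun i => ?_, fun i => ?_, ?_, 1, ?_⟩
      · rcases lt_trichotomy i 0 with h | h | h
        · have h1 : i + 1 ≤ 0 := by omega
          simp only [if_pos h.le, if_pos h1]
          exact hs1 i
        · subst h
          simp only [le_refl, if_pos, show ¬ ((0:ℤ)+1 ≤ 0) by omega, if_neg,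
            show (0:ℤ)+1 = 1 from rfl, if_true, if_false]
          show (if (0:ℤ) + 1 = 1 then y else ψ₂ (0 + 1 - 2)) ∈ F.PiIn Set.univ (ψ₁ 0)
          rw [if_pos (show (0:ℤ) + 1 = 1 by norm_num), h10]
          exact ⟨hyPi, trivial⟩
        · have h1 : ¬ (i ≤ 0) := by omega
          have h2 : ¬ (i + 1 ≤ 0) := by omega
          have h3 : i + 1 ≠ 1 := by omega
          simp only [if_neg h1, if_neg h2, if_neg h3]
          by_cases h4 : i = 1
          · subst h4
            rw [if_pos rfl]
            show ψ₂ (1 + 1 - 2) ∈ F.PiIn Set.univ y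
            rw [show (1:ℤ) + 1 - 2 = 0 by ring, h20]
            refine ⟨?_, trivial⟩
            unfold Pi
            rw [if_neg hys]
            exact rfl
          · rw [if_neg h4]
            have he : i + 1 - 2 = (i - 2) + 1 := by ring
            rw [he]
            exact hs2 (i - 2)
      · show (if i ≤ 0 then ψ₁ i else if i = 1 then y else ψ₂ (i - 2)) ∈ S
        by_cases h : i ≤ 0
        · rw [if_pos h]; exact hsubA (h1A i)
        · rw [if_neg h]
          by_cases h4 : i = 1
          · rw [if_pos h4]; exact hsubB hy
          · rw [if_neg h4]; exact hsubB (h2B (i - 2))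
      · simp only [le_refl, if_pos]; rw [h10]; exact hstarxA
      · show (if (1:ℤ) ≤ 0 then ψ₁ 1 else if (1:ℤ) = 1 then y else ψ₂ (1 - 2)) ∈ B
        norm_num
        exact hy
  obtain ⟨φ, hsol, hmem, h0A, j, hjB⟩ := main
  rcases hdec φ hsol hmem with h | h
  · exact hdisj _ (h j) hjB
  · exact hdisj _ h0A (h 0)

end MVField

end CMVF
namespace CMVF

namespace Lefschetz

variable {R : Type*} [Ring R] {X : Type*} [Fintype X] (L : Lefschetz R X)

/-- Restriction (indicator) of a function to a set, as a linear map. -/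
noncomputable def indL (A : Set X) : (X → R) →ₗ[R] (X → R) where
  toFun f := fun x => if x ∈ A then f x else 0
  map_add' f g := by funext x; by_cases h : x ∈ A <;> simp [h]
  map_smul' r f := by funext x; by_cases h : x ∈ A <;> simp [h]

lemma indL_apply {A : Set X} (f : X → R) (x : X) :
    (indL (R := R) A) f x = if x ∈ A then f x else 0 := rfl

lemma bd_apply (A : Set X) (f : X → R) (y : X) :
    L.bd A f y = if y ∈ A then ∑ x : X, (if x ∈ A then f x * L.κ x y else 0) else 0 := rfl

lemma chain_support {A : Set X} {n : ℕ} {f : X → R} (hf : f ∈ L.chainGroup A n) :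
    ∀ x, x ∉ A → f x = 0 := by
  refine Submodule.span_induction (p := fun f _ => ∀ x, x ∉ A → f x = 0) ?_ ?_ ?_ ?_ hf
  · rintro g ⟨a, ha, -, rfl⟩ x hx
    exact Pi.single_eq_of_ne (by rintro rfl; exact hx ha) 1
  · intro x _; rfl
  · intro g h _ _ hg hh x hx
    simp [hg x hx, hh x hx]
  · intro r g _ hg x hx
    simp [Pi.smul_apply, hg x hx]

lemma indL_mem_chainGroup (A : Set X) {S : Set X} {n : ℕ} {f : X → R}
    (hf : f ∈ L.chainGroup S n) : (indL (R := R) A) f ∈ L.chainGroup A n := by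
  refine Submodule.span_induction
    (p := fun f _ => (indL (R := R) A) f ∈ L.chainGroup A n) ?_ ?_ ?_ ?_ hf
  · rintro g ⟨a, _ha, hdim, rfl⟩
    by_cases haA : a ∈ A
    · have he : (indL (R := R) A) (Pi.single a 1) = Pi.single a 1 := by
        funext x
        rw [indL_apply]
        by_cases hx : x ∈ A
        · rw [if_pos hx]
        · rw [if_neg hx, Pi.single_eq_of_ne (by rintro rfl; exact hx haA) 1]
      rw [he]
      exact Submodule.subset_span ⟨a, haA, hdim, rfl⟩
    · have he : (indL (R := R) A) (Pi.single a 1) = 0 := by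
        funext x
        rw [indL_apply]
        by_cases hx : x ∈ A
        · rw [if_pos hx, Pi.single_eq_of_ne (by rintro rfl; exact haA hx) 1]; rfl
        · rw [if_neg hx]; rfl
      rw [he]
      exact Submodule.zero_mem _
  · show (indL (R := R) A) (0 : X → R) ∈ L.chainGroup A n
    rw [map_zero]; exact Submodule.zero_mem _
  · intro g h _ _ hg hh
    show (indL (R := R) A) (g + h) ∈ L.chainGroup A n
    rw [map_add]; exact Submodule.add_mem _ hg hh
  · intro r g _ hg
    show (indL (R := R) A) (r • g) ∈ L.chainGroup A n
    rw [map_smul]; exact Submodule.smul_mem _ _ hg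

lemma indL_eq_self {A : Set X} {f : X → R} (h : ∀ x, x ∉ A → f x = 0) :
    (indL (R := R) A) f = f := by
  funext x
  rw [indL_apply]
  by_cases hx : x ∈ A
  · rw [if_pos hx]
  · rw [if_neg hx, h x hx]

lemma indL_eq_zero {A : Set X} {f : X → R} (h : ∀ x, x ∈ A → f x = 0) :
    (indL (R := R) A) f = 0 := by
  funext x
  rw [indL_apply]
  by_cases hx : x ∈ A
  · rw [if_pos hx, h x hx]; rfl
  · rw [if_neg hx]; rfl

lemma indL_add_indL {A B : Set X} (hd : ∀ z, z ∈ A → z ∈ B → False) {f : X → R}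
    (h : ∀ x, x ∉ A ∪ B → f x = 0) :
    (indL (R := R) A) f + (indL (R := R) B) f = f := by
  funext x
  show (indL (R := R) A) f x + (indL (R := R) B) f x = f x
  rw [indL_apply, indL_apply]
  by_cases hA : x ∈ A
  · rw [if_pos hA, if_neg (fun hB => hd x hA hB), add_zero]
  · rw [if_neg hA]
    by_cases hB : x ∈ B
    · rw [if_pos hB, zero_add]
    · rw [if_neg hB, h x (fun hx => hx.elim hA hB), add_zero]

lemma chainGroup_mono {A S : Set X} (h : A ⊆ S) (n : ℕ) :
    L.chainGroup A n ≤ L.chainGroup S n := by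
  apply Submodule.span_mono
  rintro f ⟨a, ha, hdim, rfl⟩
  exact ⟨a, h ha, hdim, rfl⟩

/-- For `f` supported in `A`, with `κ` vanishing from `A` to `B`,
the boundary on `A ∪ B` agrees with the boundary on `A`. -/
lemma bd_union_eq {A B : Set X} {f : X → R}
    (hAB : ∀ x ∈ A, ∀ y ∈ B, L.κ x y = 0)
    (hsupp : ∀ x, x ∉ A → f x = 0) :
    L.bd (A ∪ B) f = L.bd A f := by
  funext y
  rw [bd_apply, bd_apply]
  by_cases hyA : y ∈ A
  · rw [if_pos (Set.mem_union_left _ hyA), if_pos hyA]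
    refine Finset.sum_congr rfl fun x _ => ?_
    by_cases hxA : x ∈ A
    · rw [if_pos (Set.mem_union_left _ hxA), if_pos hxA]
    · rw [if_neg hxA]
      by_cases hxB : x ∈ B
      · rw [if_pos (Set.mem_union_right _ hxB), hsupp x hxA, zero_mul]
      · rw [if_neg (fun hx => hx.elim hxA hxB)]
  · rw [if_neg hyA]
    by_cases hyB : y ∈ B
    · rw [if_pos (Set.mem_union_right _ hyB)]
      refine Finset.sum_eq_zero fun x _ => ?_
      by_cases hxA : x ∈ A
      · rw [if_pos (Set.mem_union_left _ hxA), hAB x hxA y hyB, mul_zero]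
      · by_cases hxB : x ∈ B
        · rw [if_pos (Set.mem_union_right _ hxB), hsupp x hxA, zero_mul]
        · rw [if_neg (fun hx => hx.elim hxA hxB)]
    · rw [if_neg (fun hy => hy.elim hyA hyB)]

/-- For `f` supported in `A ∪ B`, with `κ` vanishing from `B` to `A`,
restricting then taking the `A`-boundary agrees with taking the union boundary then restricting. -/
lemma bd_indL_eq {A B : Set X} {f : X → R}
    (hBA : ∀ x ∈ B, ∀ y ∈ A, L.κ x y = 0)
    (hsupp : ∀ x, x ∉ A ∪ B → f x = 0) :
    L.bd A ((indL (R := R) A) f) = (indL (R := R) A) (L.bd (A ∪ B) f) := by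
  funext y
  rw [bd_apply, indL_apply, bd_apply]
  by_cases hyA : y ∈ A
  · rw [if_pos hyA, if_pos hyA, if_pos (Set.mem_union_left _ hyA)]
    refine Finset.sum_congr rfl fun x _ => ?_
    by_cases hxA : x ∈ A
    · rw [if_pos hxA, if_pos (Set.mem_union_left _ hxA), indL_apply, if_pos hxA]
    · rw [if_neg hxA]
      by_cases hxB : x ∈ B
      · rw [if_pos (Set.mem_union_right _ hxB), hBA x hxB y hyA, mul_zero]
      · rw [if_neg (fun hx => hx.elim hxA hxB)]
  · rw [if_neg hyA, if_neg hyA]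

end Lefschetz

end CMVF
namespace CMVF

namespace Lefschetz

variable {R : Type*} [Ring R] {X : Type*} [Fintype X] (L : Lefschetz R X)

theorem homology_split {A B : Set X} (hd : ∀ z, z ∈ A → z ∈ B → False)
    (hAB : ∀ x ∈ A, ∀ y ∈ B, L.κ x y = 0)
    (hBA : ∀ x ∈ B, ∀ y ∈ A, L.κ x y = 0) (k : ℕ) :
    Nonempty (L.homology (A ∪ B) k ≃ₗ[R] (L.homology A k × L.homology B k)) := by
  have hBAcomm : L.bd (A ∪ B) = L.bd (B ∪ A) := by rw [Set.union_comm]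
  -- cycles and boundary submodules
  set C := L.cycles (A ∪ B) k with hC
  set CA := L.cycles A k with hCA
  set CB := L.cycles B k with hCB
  set Bo := (L.boundaries (A ∪ B) k).comap C.subtype with hBo
  set BoA := (L.boundaries A k).comap CA.subtype with hBoA
  set BoB := (L.boundaries B k).comap CB.subtype with hBoB
  -- restriction maps
  have hpA : ∀ c : C, (indL (R := R) A).comp C.subtype c ∈ CA := by
    intro c
    have hsupp : ∀ x, x ∉ A ∪ B → (c : X → R) x = 0 := L.chain_support c.2.1
    have hker : L.bd (A ∪ B) (c : X → R) = 0 := c.2.2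
    constructor
    · exact L.indL_mem_chainGroup A c.2.1
    · show L.bd A ((indL (R := R) A) (c : X → R)) = 0
      rw [L.bd_indL_eq hBA hsupp, hker, map_zero]
  have hpB : ∀ c : C, (indL (R := R) B).comp C.subtype c ∈ CB := by
    intro c
    have hsupp : ∀ x, x ∉ B ∪ A → (c : X → R) x = 0 := by
      rw [Set.union_comm]; exact L.chain_support c.2.1
    have hker : L.bd (B ∪ A) (c : X → R) = 0 := by rw [← hBAcomm]; exact c.2.2
    constructor
    · exact L.indL_mem_chainGroup B c.2.1
    · show L.bd B ((indL (R := R) B) (c : X → R)) = 0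
      rw [L.bd_indL_eq hAB hsupp, hker, map_zero]
  set pA : C →ₗ[R] CA := LinearMap.codRestrict CA ((indL (R := R) A).comp C.subtype) hpA with hpAdef
  set pB : C →ₗ[R] CB := LinearMap.codRestrict CB ((indL (R := R) B).comp C.subtype) hpB with hpBdef
  -- inclusion maps
  have hiA : ∀ f : CA, CA.subtype f ∈ C := by
    intro f
    have hsupp : ∀ x, x ∉ A → (f : X → R) x = 0 := L.chain_support f.2.1
    constructor
    · exact L.chainGroup_mono Set.subset_union_left k f.2.1
    · show L.bd (A ∪ B) (f : X → R) = 0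
      rw [L.bd_union_eq hAB hsupp]; exact f.2.2
  have hiB : ∀ f : CB, CB.subtype f ∈ C := by
    intro f
    have hsupp : ∀ x, x ∉ B → (f : X → R) x = 0 := L.chain_support f.2.1
    constructor
    · exact L.chainGroup_mono Set.subset_union_right k f.2.1
    · show L.bd (A ∪ B) (f : X → R) = 0
      rw [hBAcomm, L.bd_union_eq hBA hsupp]; exact f.2.2
  set iA : CA →ₗ[R] C := LinearMap.codRestrict C CA.subtype hiA with hiAdef
  set iB : CB →ₗ[R] C := LinearMap.codRestrict C CB.subtype hiB with hiBdef
  -- the forward map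
  set φmap : C →ₗ[R] (CA ⧸ BoA) × (CB ⧸ BoB) :=
    LinearMap.prod (BoA.mkQ.comp pA) (BoB.mkQ.comp pB) with hφdef
  have hker : Bo ≤ LinearMap.ker φmap := by
    intro c hc
    obtain ⟨g, hg, hgeq0⟩ := hc
    have hgeq : L.bd (A ∪ B) g = (c : X → R) := hgeq0
    have hgsupp : ∀ x, x ∉ A ∪ B → g x = 0 := L.chain_support hg
    have hgsupp' : ∀ x, x ∉ B ∪ A → g x = 0 := by rw [Set.union_comm]; exact hgsupp
    rw [LinearMap.mem_ker]
    have h1 : pA c ∈ BoA := by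
      show ((indL (R := R) A) (c : X → R)) ∈ L.boundaries A k
      rw [← hgeq, ← L.bd_indL_eq hBA hgsupp]
      exact ⟨(indL (R := R) A) g, L.indL_mem_chainGroup A hg, rfl⟩
    have h2 : pB c ∈ BoB := by
      show ((indL (R := R) B) (c : X → R)) ∈ L.boundaries B k
      have : L.bd (A ∪ B) g = L.bd (B ∪ A) g := by rw [hBAcomm]
      rw [← hgeq, this, ← L.bd_indL_eq hAB hgsupp']
      exact ⟨(indL (R := R) B) g, L.indL_mem_chainGroup B hg, rfl⟩
    have e1 : BoA.mkQ (pA c) = 0 := (Submodule.Quotient.mk_eq_zero _).mpr h1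
    have e2 : BoB.mkQ (pB c) = 0 := (Submodule.Quotient.mk_eq_zero _).mpr h2
    show (BoA.mkQ (pA c), BoB.mkQ (pB c)) = 0
    rw [e1, e2]; rfl
  set Φ : (C ⧸ Bo) →ₗ[R] (CA ⧸ BoA) × (CB ⧸ BoB) := Bo.liftQ φmap hker with hΦdef
  -- the backward map
  have hkerA : BoA ≤ LinearMap.ker (Bo.mkQ.comp iA) := by
    intro f hf
    obtain ⟨g, hg, hgeq0⟩ := hf
    have hgeq : L.bd A g = (f : X → R) := hgeq0
    have hgsupp : ∀ x, x ∉ A → g x = 0 := L.chain_support hg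
    rw [LinearMap.mem_ker]
    have h1 : iA f ∈ Bo := by
      show ((f : X → R)) ∈ L.boundaries (A ∪ B) k
      refine ⟨g, L.chainGroup_mono Set.subset_union_left (k+1) hg, ?_⟩
      rw [L.bd_union_eq hAB hgsupp, hgeq]
    exact (Submodule.Quotient.mk_eq_zero _).mpr h1
  have hkerB : BoB ≤ LinearMap.ker (Bo.mkQ.comp iB) := by
    intro f hf
    obtain ⟨g, hg, hgeq0⟩ := hf
    have hgeq : L.bd B g = (f : X → R) := hgeq0
    have hgsupp : ∀ x, x ∉ B → g x = 0 := L.chain_support hg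
    rw [LinearMap.mem_ker]
    have h1 : iB f ∈ Bo := by
      show ((f : X → R)) ∈ L.boundaries (A ∪ B) k
      refine ⟨g, L.chainGroup_mono Set.subset_union_right (k+1) hg, ?_⟩
      rw [hBAcomm, L.bd_union_eq hBA hgsupp, hgeq]
    exact (Submodule.Quotient.mk_eq_zero _).mpr h1
  set Ψ : (CA ⧸ BoA) × (CB ⧸ BoB) →ₗ[R] (C ⧸ Bo) :=
    (BoA.liftQ (Bo.mkQ.comp iA) hkerA).coprod (BoB.liftQ (Bo.mkQ.comp iB) hkerB) with hΨdef
  -- the two compositions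
  have h1 : Φ.comp Ψ = LinearMap.id := by
    apply LinearMap.ext
    rintro ⟨u, v⟩
    obtain ⟨f, rfl⟩ := Submodule.Quotient.mk_surjective _ u
    obtain ⟨g, rfl⟩ := Submodule.Quotient.mk_surjective _ v
    have hfsupp : ∀ x, x ∉ A → (f : X → R) x = 0 := L.chain_support f.2.1
    have hgsupp : ∀ x, x ∉ B → (g : X → R) x = 0 := L.chain_support g.2.1
    have hΨval : Ψ (Submodule.Quotient.mk f, Submodule.Quotient.mk g)
        = Submodule.Quotient.mk (iA f + iB g) := by
      show (BoA.liftQ (Bo.mkQ.comp iA) hkerA) (Submodule.Quotient.mk f)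
          + (BoB.liftQ (Bo.mkQ.comp iB) hkerB) (Submodule.Quotient.mk g) = _
      rw [Submodule.liftQ_apply, Submodule.liftQ_apply]
      show Bo.mkQ (iA f) + Bo.mkQ (iB g) = _
      rw [← map_add]
      rfl
    have hpAval : pA (iA f + iB g) = f := by
      apply Subtype.ext
      show (indL (R := R) A) ((f : X → R) + (g : X → R)) = (f : X → R)
      rw [map_add, indL_eq_self hfsupp, indL_eq_zero
        (fun x hx => hgsupp x (fun hxB => hd x hx hxB)), add_zero]
    have hpBval : pB (iA f + iB g) = g := by
      apply Subtype.ext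
      show (indL (R := R) B) ((f : X → R) + (g : X → R)) = (g : X → R)
      rw [map_add, indL_eq_zero (fun x hx => hfsupp x (fun hxA => hd x hxA hx)),
        indL_eq_self hgsupp, zero_add]
    show Φ (Ψ (Submodule.Quotient.mk f, Submodule.Quotient.mk g)) = _
    rw [hΨval]
    show (BoA.mkQ (pA (iA f + iB g)), BoB.mkQ (pB (iA f + iB g)))
        = (Submodule.Quotient.mk f, Submodule.Quotient.mk g)
    rw [hpAval, hpBval]
    rfl
  have h2 : Ψ.comp Φ = LinearMap.id := by
    apply LinearMap.ext
    intro q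
    obtain ⟨c, rfl⟩ := Submodule.Quotient.mk_surjective _ q
    have hcsupp : ∀ x, x ∉ A ∪ B → (c : X → R) x = 0 := L.chain_support c.2.1
    show Ψ (Φ (Submodule.Quotient.mk c)) = Submodule.Quotient.mk c
    have hΦval : Φ (Submodule.Quotient.mk c) = (BoA.mkQ (pA c), BoB.mkQ (pB c)) := by
      rw [hΦdef, Submodule.liftQ_apply]; rfl
    rw [hΦval]
    show (BoA.liftQ (Bo.mkQ.comp iA) hkerA) (BoA.mkQ (pA c))
        + (BoB.liftQ (Bo.mkQ.comp iB) hkerB) (BoB.mkQ (pB c)) = _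
    show (BoA.liftQ (Bo.mkQ.comp iA) hkerA) (Submodule.Quotient.mk (pA c))
        + (BoB.liftQ (Bo.mkQ.comp iB) hkerB) (Submodule.Quotient.mk (pB c)) = _
    rw [Submodule.liftQ_apply, Submodule.liftQ_apply]
    show Bo.mkQ (iA (pA c) + iB (pB c)) = Submodule.Quotient.mk c
    have : iA (pA c) + iB (pB c) = c := by
      apply Subtype.ext
      show (indL (R := R) A) (c : X → R) + (indL (R := R) B) (c : X → R) = (c : X → R)
      exact indL_add_indL hd hcsupp
    rw [this]
    rfl
  exact ⟨LinearEquiv.ofLinear Φ Ψ h1 h2⟩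

end Lefschetz

end CMVF
open CMVF

variable {R : Type*} [Ring R] {X : Type*} [Fintype X]

/-- Theorem (additivity of the Conley index): if an isolated invariant set `S` decomposes
into isolated invariant subsets `S₁`, `S₂`, then `Con(S) ≅ Con(S₁) ⊕ Con(S₂)`. -/
theorem conley_index_additivity (L : Lefschetz R X) (F : MVField L)
    (hX : F.InvariantIn Set.univ Set.univ) (S S₁ S₂ : Set X)
    (hS : F.IsoInvIn Set.univ S)
    (hS₁ : F.IsoInvIn Set.univ S₁) (hS₂ : F.IsoInvIn Set.univ S₂)
    (hsub₁ : S₁ ⊆ S) (hsub₂ : S₂ ⊆ S) (hdisj : S₁ ∩ S₂ = ∅)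
    (hdec : ∀ φ : ℤ → X, F.IsSolIn Set.univ φ → (∀ i, φ i ∈ S) →
      (∀ i, φ i ∈ S₁) ∨ (∀ i, φ i ∈ S₂)) :
    ∀ k, Nonempty (L.homology S k ≃ₗ[R] (L.homology S₁ k × L.homology S₂ k)) := by
  have hd : ∀ z, z ∈ S₁ → z ∈ S₂ → False := by
    intro z h1 h2
    have hz : z ∈ S₁ ∩ S₂ := ⟨h1, h2⟩
    rw [hdisj] at hz
    exact hz
  have hAB := F.cross_kappa hS₁.1 hS₂.1 hsub₁ hsub₂ hd hdec
  have hBA := F.cross_kappa hS₂.1 hS₁.1 hsub₂ hsub₁ (fun z h2 h1 => hd z h1 h2)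
      (fun φ hφ hm => (hdec φ hφ hm).symm)
  have hunion : S = S₁ ∪ S₂ := by
    apply Set.Subset.antisymm
    · intro x hx
      obtain ⟨φ, hsol, hφ0, hmem⟩ := F.exists_sol_of_invariant hS.1 hx
      rcases hdec φ hsol hmem with h | h
      · left
        have hstar : F.star x ∈ S₁ := hφ0 ▸ h 0
        have hc := F.compat_of_invariant hS₁.1 hstar
        rw [F.mclass_star] at hc
        exact hc (F.mem_mclass x)
      · right
        have hstar : F.star x ∈ S₂ := hφ0 ▸ h 0
        have hc := F.compat_of_invariant hS₂.1 hstar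
        rw [F.mclass_star] at hc
        exact hc (F.mem_mclass x)
    · exact Set.union_subset hsub₁ hsub₂
  intro k
  rw [hunion]
  exact L.homology_split hd hAB hBA k
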